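/- arXiv:2307.06393 — 6 statements merged into one kernel-verified Lean document; each statement's English description precedes it below -/
import Mathlib

section
/- (Long-Term Survival Probability.) Let b > d ≥ 0, r := b−d > 0, T > 0, and δ ∈ (0,1]. Set p := r/(b·e^{rT} − d), q := d(e^{rT}−1)/(b·e^{rT} − d), and for ε ∈ [0,1] let Q_ε be the 2×2 real matrix [[p−1+ε(1−q), 1−ε(1−q)], [p−1, 1]]. For n ≥ 1 define s_n := 1 − h(Q₁·Q_δ^{n−1}, 0), where h(M,0) = M₀₁/M₁₁. Then the denominators (Q₁·Q_δ^{n−1})₁₁ are nonzero for all n ≥ 1 (so s_n is well defined), and: if δ·e^{rT} ≤ 1 then lim_{n→∞} s_n = 0, while if δ·e^{rT} > 1 then lim_{n→∞} s_n = r(δ − e^{−rT})/(δ·b·(1 − e^{−rT})). -/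
/-!
Write `c = δ(1 - q)`. The row vector `(-1, 1)` is a left eigenvector of every `Q_ε`, with eigenvalue
`ε(1 - q)`; this gives `(Q_δ^m)₁₁ - (Q_δ^m)₀₁ = c^m` and turns the `(0,1)` entry into the
solution of `X_{m+1} = p X_m + (1 - c) c^m`. Hence
`s_{m+1} = (1 - q) / (1 + p (1 - c)/c · ∑_{k<m} (p/c)^k)`.
Since `1 - q = p e^{rT}`, the ratio is `p/c = 1/(δ e^{rT})`: the geometric series converges exactly
when `δ e^{rT} > 1`, and otherwise the denominator diverges and `s_n → 0`.
-/

open Real Filter Matrix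

/-- The coefficient matrix `Q_ε` of the linear fractional generating function of the number of
descendants after a bottleneck with survival probability `ε` followed by one growth phase. -/
noncomputable def Qmat (p q ε : ℝ) : Matrix (Fin 2) (Fin 2) ℝ :=
  !![p - 1 + ε * (1 - q), 1 - ε * (1 - q); p - 1, 1]

open Finset Topology

section Qmat

variable (p q ε : ℝ)

lemma Qmat_mul_apply_one_sub_apply_zero (B : Matrix (Fin 2) (Fin 2) ℝ) (j : Fin 2) :
    (Qmat p q ε * B) 1 j - (Qmat p q ε * B) 0 j = ε * (1 - q) * (B 1 j - B 0 j) := by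
  simp only [Qmat, mul_apply, Fin.sum_univ_two, of_apply, cons_val', cons_val_zero, cons_val_one,
    empty_val', cons_val_fin_one]
  ring

lemma Qmat_mul_apply_one (B : Matrix (Fin 2) (Fin 2) ℝ) (j : Fin 2) :
    (Qmat p q ε * B) 1 j = p * B 0 j + (B 1 j - B 0 j) := by
  simp only [Qmat, mul_apply, Fin.sum_univ_two, of_apply, cons_val', cons_val_zero, cons_val_one,
    empty_val', cons_val_fin_one]
  ring

variable {p q ε} {c : ℝ}

lemma Qmat_pow_apply_one_sub_apply_zero (hc : ε * (1 - q) = c) (m : ℕ) :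
    (Qmat p q ε ^ m) 1 1 - (Qmat p q ε ^ m) 0 1 = c ^ m := by
  induction m with
  | zero => simp
  | succ m ih => rw [pow_succ', Qmat_mul_apply_one_sub_apply_zero, ih, hc, pow_succ']

lemma Qmat_pow_succ_apply_zero_one (hc : ε * (1 - q) = c) (m : ℕ) :
    (Qmat p q ε ^ (m + 1)) 0 1 = p * (Qmat p q ε ^ m) 0 1 + (1 - c) * c ^ m := by
  have h := Qmat_mul_apply_one_sub_apply_zero p q ε (Qmat p q ε ^ m) 1
  rw [Qmat_mul_apply_one, Qmat_pow_apply_one_sub_apply_zero hc, hc, ← pow_succ'] at h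
  linear_combination -h

lemma Qmat_pow_apply_zero_one (hc : ε * (1 - q) = c) (hc₀ : c ≠ 0) (m : ℕ) :
    (Qmat p q ε ^ m) 0 1 = (1 - c) / c * c ^ m * ∑ k ∈ range m, (p / c) ^ k := by
  induction m with
  | zero => simp
  | succ m ih =>
    rw [Qmat_pow_succ_apply_zero_one hc, ih, geom_sum_succ]
    field_simp
    ring

lemma Qmat_mul_pow_apply_one_one (q' ε' : ℝ) (hc : ε * (1 - q) = c) (hc₀ : c ≠ 0) (m : ℕ) :
    (Qmat p q' ε' * Qmat p q ε ^ m) 1 1 =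
      c ^ m * (1 + p * ((1 - c) / c) * ∑ k ∈ range m, (p / c) ^ k) := by
  rw [Qmat_mul_apply_one, Qmat_pow_apply_one_sub_apply_zero hc, Qmat_pow_apply_zero_one hc hc₀]
  ring

lemma one_sub_Qmat_one_mul_pow_div (hc : ε * (1 - q) = c) (hc₀ : c ≠ 0) (m : ℕ)
    (h : 1 + p * ((1 - c) / c) * ∑ k ∈ range m, (p / c) ^ k ≠ 0) :
    1 - (Qmat p q 1 * Qmat p q ε ^ m) 0 1 / (Qmat p q 1 * Qmat p q ε ^ m) 1 1 =
      (1 - q) / (1 + p * ((1 - c) / c) * ∑ k ∈ range m, (p / c) ^ k) := by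
  have hnum := Qmat_mul_apply_one_sub_apply_zero p q 1 (Qmat p q ε ^ m) 1
  rw [Qmat_pow_apply_one_sub_apply_zero hc, one_mul] at hnum
  have hden := Qmat_mul_pow_apply_one_one (p := p) q 1 hc hc₀ m
  rw [one_sub_div (by rw [hden]; exact mul_ne_zero (pow_ne_zero m hc₀) h), hnum, hden,
    mul_comm (1 - q), mul_div_mul_left _ _ (pow_ne_zero m hc₀)]

end Qmat

lemma one_add_mul_geom_sum_pos {p c : ℝ} (hp : 0 ≤ p) (hc₀ : 0 < c) (hc₁ : c ≤ 1) (m : ℕ) :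
    0 < 1 + p * ((1 - c) / c) * ∑ k ∈ range m, (p / c) ^ k := by
  have : 0 ≤ 1 - c := sub_nonneg.mpr hc₁
  positivity

lemma tendsto_div_one_add_mul_geom_sum_of_lt_one (a K : ℝ) {x : ℝ} (hx₀ : 0 ≤ x) (hx₁ : x < 1)
    (h : 1 - x + K ≠ 0) :
    Tendsto (fun m ↦ a / (1 + K * ∑ k ∈ range m, x ^ k)) atTop (𝓝 (a * (1 - x) / (1 - x + K))) := by
  have hx : 1 - x ≠ 0 := (sub_pos.mpr hx₁).ne'
  have hlim : 1 + K * (1 - x)⁻¹ ≠ 0 := by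
    rw [← div_eq_mul_inv, one_add_div hx]
    exact div_ne_zero h hx
  rw [show a * (1 - x) / (1 - x + K) = a / (1 + K * (1 - x)⁻¹) by field_simp]
  exact tendsto_const_nhds.div (tendsto_const_nhds.add
    ((hasSum_geometric_of_lt_one hx₀ hx₁).tendsto_sum_nat.const_mul K)) hlim

lemma tendsto_geom_sum_atTop_of_one_le {x : ℝ} (hx : 1 ≤ x) :
    Tendsto (fun m ↦ ∑ k ∈ range m, x ^ k) atTop atTop := by
  refine tendsto_atTop_mono (fun m ↦ ?_) tendsto_natCast_atTop_atTop
  simpa using card_nsmul_le_sum (range m) (x ^ ·) 1 fun k _ ↦ one_le_pow₀ hx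

lemma tendsto_div_one_add_mul_geom_sum_of_one_le (a : ℝ) {K x : ℝ} (hK : 0 < K) (hx : 1 ≤ x) :
    Tendsto (fun m ↦ a / (1 + K * ∑ k ∈ range m, x ^ k)) atTop (𝓝 0) :=
  tendsto_const_nhds.div_atTop <| tendsto_atTop_add_const_left _ _ <|
    (tendsto_geom_sum_atTop_of_one_le hx).const_mul_atTop hK

section BirthDeath

variable {b d r T p q : ℝ}

lemma birthDeath_coeffs (hb : d < b) (hd : 0 ≤ d) (hr : r = b - d) (hT : 0 < T)
    (hp : p = r / (b * exp (r * T) - d))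
    (hq : q = d * (exp (r * T) - 1) / (b * exp (r * T) - d)) :
    0 < p ∧ p < 1 ∧ 1 - q = p * exp (r * T) ∧ p * exp (r * T) ≤ 1 := by
  have hr₀ : 0 < r := by rw [hr]; linarith
  have hb₀ : 0 < b := hd.trans_lt hb
  set E := exp (r * T)
  have hE₁ : 1 < E := one_lt_exp_iff.mpr (by positivity)
  have hD : 0 < b * E - d := by nlinarith
  have hp₀ : 0 < p := by rw [hp]; positivity
  refine ⟨hp₀, ?_, ?_, ?_⟩
  · rw [hp, div_lt_one hD]; nlinarith
  · rw [hq, hp, hr, div_mul_eq_mul_div, eq_div_iff hD.ne', sub_mul, div_mul_cancel₀ _ hD.ne']; ring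
  · rw [hp, div_mul_eq_mul_div, div_le_one hD, hr]; nlinarith

lemma birthDeath_limit_eq {δ : ℝ} (hb : d < b) (hd : 0 ≤ d) (hr : r = b - d) (hT : 0 < T)
    (hδ : δ ≠ 0) (hp : p = r / (b * exp (r * T) - d)) :
    p * (δ * exp (r * T) - 1) / (δ * (1 - p)) =
      r * (δ - exp (-r * T)) / (δ * b * (1 - exp (-r * T))) := by
  have hr₀ : 0 < r := by rw [hr]; linarith
  have hb₀ : 0 < b := hd.trans_lt hb
  have hE₁ : 1 < exp (r * T) := one_lt_exp_iff.mpr (by positivity)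
  have hD : 0 < b * exp (r * T) - d := by nlinarith
  rw [neg_mul, Real.exp_neg, hp]
  field_simp
  have hbE : b * exp (r * T) - d - r = b * (exp (r * T) - 1) := by linear_combination -hr
  rw [div_eq_div_iff (by rw [hbE]; nlinarith) (by linarith)]
  linear_combination (exp (r * T) * δ - 1) * hr

end BirthDeath

/-- Long-term survival probability: with `s_n = 1 - h(Q₁·Q_δ^{n-1}, 0)` the survival probability
at the end of the `n`-th cycle, the denominators are nonzero, and `s_n → 0` if `δ·e^{rT} ≤ 1`,
while `s_n → r(δ - e^{-rT})/(δ·b·(1 - e^{-rT}))` if `δ·e^{rT} > 1`. -/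
theorem longTerm_survival_probability
    (b d r T δ p q : ℝ)
    (hb : d < b) (hd : 0 ≤ d) (hr : r = b - d) (hT : 0 < T)
    (hδ0 : 0 < δ) (hδ1 : δ ≤ 1)
    (hp : p = r / (b * exp (r * T) - d))
    (hq : q = d * (exp (r * T) - 1) / (b * exp (r * T) - d))
    (s : ℕ → ℝ)
    (hs : ∀ n : ℕ, 1 ≤ n →
      s n = 1 - (Qmat p q 1 * (Qmat p q δ) ^ (n - 1)) 0 1
              / (Qmat p q 1 * (Qmat p q δ) ^ (n - 1)) 1 1) :
    (∀ n : ℕ, 1 ≤ n → (Qmat p q 1 * (Qmat p q δ) ^ (n - 1)) 1 1 ≠ 0) ∧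
    (δ * exp (r * T) ≤ 1 → Tendsto s atTop (nhds 0)) ∧
    (1 < δ * exp (r * T) →
      Tendsto s atTop (nhds (r * (δ - exp (-r * T)) / (δ * b * (1 - exp (-r * T)))))) := by
  obtain ⟨hp₀, hp₁, hq₁, hpE⟩ := birthDeath_coeffs hb hd hr hT hp hq
  set c := δ * (1 - q) with hc
  have hcE : c = δ * exp (r * T) * p := by rw [hc, hq₁]; ring
  have hc₀ : 0 < c := by rw [hcE]; positivity
  have hc₁ : c ≤ 1 := by rw [hc, hq₁]; nlinarith [mul_pos hp₀ (exp_pos (r * T))]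
  have hden := one_add_mul_geom_sum_pos hp₀.le hc₀ hc₁
  have hs' : ∀ m : ℕ, s (m + 1) = (1 - q) / (1 + p * ((1 - c) / c) * ∑ k ∈ range m, (p / c) ^ k) :=
    fun m ↦ by rw [hs (m + 1) (Nat.le_add_left 1 m), Nat.add_sub_cancel,
      one_sub_Qmat_one_mul_pow_div hc.symm hc₀.ne' m (hden m).ne']
  refine ⟨fun n _ ↦ ?_, fun hδE ↦ ?_, fun hδE ↦ ?_⟩
  · rw [Qmat_mul_pow_apply_one_one q 1 hc.symm hc₀.ne']
    exact (mul_pos (pow_pos hc₀ _) (hden _)).ne'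
  · have hcp : c ≤ p := by rw [hcE]; nlinarith
    rw [← tendsto_add_atTop_iff_nat 1]
    simp_rw [hs']
    exact tendsto_div_one_add_mul_geom_sum_of_one_le _ (mul_pos hp₀ (div_pos (by linarith) hc₀))
      ((one_le_div hc₀).mpr hcp)
  · have hpc : p / c < 1 := (div_lt_one hc₀).mpr (by rw [hcE]; nlinarith)
    rw [← birthDeath_limit_eq hb hd hr hT hδ0.ne' hp, ← tendsto_add_atTop_iff_nat 1]
    simp_rw [hs']
    convert tendsto_div_one_add_mul_geom_sum_of_lt_one (1 - q) (p * ((1 - c) / c)) (by positivity) hpc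
      (by have := sub_pos.mpr hpc; positivity) using 2
    have hKx : 1 - p / c + p * ((1 - c) / c) = 1 - p := by field_simp; ring
    rw [hKx, hq₁, hcE]
    field_simp
end

section
/- (Optimal Regime Survival Rate.) Let b > d ≥ 0, r := b−d > 0, T > 0, and δ := e^{−rT}. Define the 2×2 real matrices Q̄₁ := [[δb−d, d(1−δ)], [b(δ−1), b−δd]] and Q̄_δ := [[2δb−δd−b, b(1−δ)], [b(δ−1), b−δd]]. Then for every integer n ≥ 1, the entry (Q̄₁·Q̄_δ^{n−1})₁₁ is nonzero and 1 − (Q̄₁·Q̄_δ^{n−1})₀₁/(Q̄₁·Q̄_δ^{n−1})₁₁ = r/(b·n·(1−δ) + δ·r). -/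
/-!
With `λ = δ r` and `N = [[-1, 1], [-1, 1]]` one has `Q̄_δ = λ I + b(1 - δ) N`, `N² = 0` and `Q̄₁ N = λ N`,
so `Q̄₁ Q̄_δ = λ (Q̄₁ + b(1 - δ) N)` and `N Q̄_δ = λ N`. Hence `Q̄₁ Q̄_δ^m = λ^m (Q̄₁ + m b(1 - δ) N)`, whose
last column is `λ^m (d(1 - δ) + m b(1 - δ), b - δd + m b(1 - δ))`; the factor `λ^m` cancels in the ratio.
-/

open Real

theorem mul_pow_eq_smul_add_smul {R M : Type*} [CommSemiring R] [Semiring M] [Algebra R M]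
    {A B N : M} {l c : R} (hAB : A * B = l • (A + c • N)) (hNB : N * B = l • N) (m : ℕ) :
    A * B ^ m = l ^ m • (A + ((m : R) * c) • N) := by
  induction m with
  | zero => simp
  | succ m ih =>
    rw [pow_succ, ← mul_assoc, ih, smul_mul_assoc, add_mul, smul_mul_assoc, hAB, hNB]
    push_cast
    module

namespace BirthDeath

variable (b d δ : ℝ)

noncomputable def growthMatrix : Matrix (Fin 2) (Fin 2) ℝ :=
  !![δ * b - d, d * (1 - δ); b * (δ - 1), b - δ * d]

noncomputable def bottleneckMatrix : Matrix (Fin 2) (Fin 2) ℝ :=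
  !![2 * δ * b - δ * d - b, b * (1 - δ); b * (δ - 1), b - δ * d]

def nilpotentDirection : Matrix (Fin 2) (Fin 2) ℝ := !![-1, 1; -1, 1]

theorem growthMatrix_mul_bottleneckMatrix :
    growthMatrix b d δ * bottleneckMatrix b d δ =
      (δ * (b - d)) • (growthMatrix b d δ + (b * (1 - δ)) • nilpotentDirection) := by
  ext i j
  fin_cases i <;> fin_cases j <;>
    simp [growthMatrix, bottleneckMatrix, nilpotentDirection, Matrix.mul_apply,
      Fin.sum_univ_two] <;> ring

theorem nilpotentDirection_mul_bottleneckMatrix :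
    nilpotentDirection * bottleneckMatrix b d δ = (δ * (b - d)) • nilpotentDirection := by
  ext i j
  fin_cases i <;> fin_cases j <;>
    simp [bottleneckMatrix, nilpotentDirection, Matrix.mul_apply, Fin.sum_univ_two] <;> ring

theorem growthMatrix_mul_bottleneckMatrix_pow (m : ℕ) :
    growthMatrix b d δ * bottleneckMatrix b d δ ^ m =
      (δ * (b - d)) ^ m • (growthMatrix b d δ + (m * (b * (1 - δ))) • nilpotentDirection) :=
  mul_pow_eq_smul_add_smul (growthMatrix_mul_bottleneckMatrix b d δ)
    (nilpotentDirection_mul_bottleneckMatrix b d δ) m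

theorem growthMatrix_mul_bottleneckMatrix_pow_apply_zero_one (m : ℕ) :
    (growthMatrix b d δ * bottleneckMatrix b d δ ^ m) 0 1 =
      (δ * (b - d)) ^ m * (d * (1 - δ) + m * (b * (1 - δ))) := by
  rw [growthMatrix_mul_bottleneckMatrix_pow]
  simp [growthMatrix, nilpotentDirection]

theorem growthMatrix_mul_bottleneckMatrix_pow_apply_one_one (m : ℕ) :
    (growthMatrix b d δ * bottleneckMatrix b d δ ^ m) 1 1 =
      (δ * (b - d)) ^ m * (b - δ * d + m * (b * (1 - δ))) := by
  rw [growthMatrix_mul_bottleneckMatrix_pow]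
  simp [growthMatrix, nilpotentDirection]

end BirthDeath

open BirthDeath in
/-- Optimal regime survival rate: with `δ = e^{-rT}` the optimal dilution factor and
`Q̄₁, Q̄_δ` the rescaled coefficient matrices of the per-cycle generating functions,
for every `n ≥ 1` the entry `(Q̄₁·Q̄_δ^{n-1})₁₁` is nonzero and
`1 - (Q̄₁·Q̄_δ^{n-1})₀₁/(Q̄₁·Q̄_δ^{n-1})₁₁ = r/(b·n·(1-δ) + δ·r)`. -/
theorem optimal_regime_survival_rate
    (b d r T δ : ℝ)
    (hb : d < b) (hd : 0 ≤ d) (hr : r = b - d) (hT : 0 < T)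
    (hδ : δ = exp (-r * T))
    (Q1 Qδ : Matrix (Fin 2) (Fin 2) ℝ)
    (hQ1 : Q1 = !![δ * b - d, d * (1 - δ); b * (δ - 1), b - δ * d])
    (hQδ : Qδ = !![2 * δ * b - δ * d - b, b * (1 - δ); b * (δ - 1), b - δ * d]) :
    ∀ n : ℕ, 1 ≤ n →
      (Q1 * Qδ ^ (n - 1)) 1 1 ≠ 0 ∧
      1 - (Q1 * Qδ ^ (n - 1)) 0 1 / (Q1 * Qδ ^ (n - 1)) 1 1 =
        r / (b * n * (1 - δ) + δ * r) := by
  obtain rfl : Q1 = growthMatrix b d δ := hQ1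
  obtain rfl : Qδ = bottleneckMatrix b d δ := hQδ
  intro n hn
  obtain ⟨m, rfl⟩ := Nat.exists_eq_add_of_le' hn
  rw [Nat.add_sub_cancel, growthMatrix_mul_bottleneckMatrix_pow_apply_zero_one,
    growthMatrix_mul_bottleneckMatrix_pow_apply_one_one]
  have hr_pos : 0 < r := by linarith
  have hδ_pos : 0 < δ := hδ ▸ exp_pos _
  have hδ_lt_one : δ < 1 := by
    rw [hδ, exp_lt_one_iff, neg_mul, neg_lt_zero]
    positivity
  have hpow_ne : (δ * (b - d)) ^ m ≠ 0 := by
    rw [← hr]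
    positivity
  have hden_pos : 0 < b - δ * d + m * (b * (1 - δ)) := by
    have : 0 < 1 - δ := by linarith
    have : 0 < b := by linarith
    have : δ * d < b := by nlinarith
    positivity
  refine ⟨mul_ne_zero hpow_ne hden_pos.ne', ?_⟩
  rw [mul_div_mul_left _ _ hpow_ne, one_sub_div hden_pos.ne']
  congr 1 <;> push_cast
  · linear_combination -hr
  · linear_combination -δ * hr
end

section
/- (Coalescent tree of a lineage: critical dilution.) Let b > d ≥ 0, r := b−d > 0, T > 0, and δ := e^{−rT}. Define F̃(t) := 1 + (b/r)(e^{rt} − 1). Then for every integer k ≥ 0 and every real s with 0 ≤ s < T: δ^k·F̃(kT+s) + (1−δ)·Σ_{j=1}^{k} δ^{j−1}·F̃(jT) = 1 + (b/r)·( e^{rs} − 1 + k(e^{rT} − 1) ). -/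
open Real Finset

/-- Critical-dilution closed form: with the optimal dilution factor `δ = e^{-rT}`,
`δ^k F̃(kT+s) + (1-δ) ∑_{j=1}^k δ^{j-1} F̃(jT) = 1 + (b/r)(e^{rs} - 1 + k(e^{rT} - 1))`,
where `F̃(t) = 1 + (b/r)(e^{rt} - 1)` is the inverse tail distribution of node depths of the
coalescent point process of a linear birth-death process with rates `b, d`. -/
theorem cpp_bottlenecks_critical_dilution_closed_form
    (b d r T δ : ℝ) (hb : d < b) (hd : 0 ≤ d) (hr : r = b - d)
    (hT : 0 < T) (hδ : δ = exp (-r * T))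
    (F : ℝ → ℝ) (hF : ∀ t : ℝ, F t = 1 + b / r * (exp (r * t) - 1)) :
    ∀ (k : ℕ) (s : ℝ), 0 ≤ s → s < T →
      δ ^ k * F (k * T + s) + (1 - δ) * ∑ j ∈ Finset.Icc 1 k, δ ^ (j - 1) * F (j * T) =
        1 + b / r * (exp (r * s) - 1 + k * (exp (r * T) - 1)) := by
  have hδE : δ * exp (r * T) = 1 := by
    rw [hδ, ← Real.exp_add]; ring_nf; exact Real.exp_zero
  intro k s hs hsT
  induction k with
  | zero => simp [hF]
  | succ k ih =>
    rw [Finset.sum_Icc_succ_top (by omega)]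
    have h3 : δ ^ k * exp (r * (k * T)) = 1 := by
      rw [hδ, ← Real.exp_nat_mul, ← Real.exp_add]
      ring_nf; exact Real.exp_zero
    have h1 : exp (r * ((k + 1 : ℕ) * T + s)) = exp (r * (k * T + s)) * exp (r * T) := by
      rw [← Real.exp_add]; push_cast; ring_nf
    have h2 : exp (r * ((k + 1 : ℕ) * T)) = exp (r * (k * T)) * exp (r * T) := by
      rw [← Real.exp_add]; push_cast; ring_nf
    simp only [hF, Nat.add_sub_cancel, h1, h2]
    simp only [hF] at ih
    push_cast
    push_cast at ih
    linear_combination ih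
      + (b / r * δ ^ k * exp (r * (k * T + s)) - b / r * δ ^ k * exp (r * (k * T))) * hδE
      + b / r * (exp (r * T) - 1) * h3
end

section
/- Let (Ω, P) be a probability space, a > 0, H : Ω → ℝ a nonnegative measurable random variable, and F : [0,a] → ℝ a function with F(t) ≥ 1 for all t, such that P(H > t) = 1/F(t) for every t ∈ [0,a] and P(H = a) = 0. Assume F(a) > 1. Then ∫_{{H < a}} H dP = ∫_0^a dt/F(t) − a/F(a), and consequently a + (F(a) − 1)·E[H | H < a] = F(a)·∫_0^a dt/F(t), where E[H | H < a] := (∫_{{H < a}} H dP)/P(H < a). -/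
open MeasureTheory Real intervalIntegral

/-! Truncating at level `a`, the layer cake formula gives `E[min(H, a)] = ∫_0^a P(H > t) dt`,
while splitting along `{H < a}` gives `E[min(H, a)] = ∫_{H < a} H dP + a·P(H ≥ a)`.
Since `P(H = a) = 0`, `P(H ≥ a) = 1/F(a)`, which yields the first identity; the second follows
from it because `P(H < a) = 1 - 1/F(a)`. -/

section

variable {Ω : Type*} [MeasurableSpace Ω] {μ : Measure Ω} {H : Ω → ℝ} {a : ℝ}

lemma integrable_min_const [IsFiniteMeasure μ] (hH : Measurable H) (hHnn : ∀ ω, 0 ≤ H ω)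
    (ha : 0 ≤ a) : Integrable (fun ω => min (H ω) a) μ :=
  Integrable.of_bound (hH.min measurable_const).aestronglyMeasurable a
    (Filter.Eventually.of_forall fun ω => by
      rw [Real.norm_of_nonneg (le_min (hHnn ω) ha)]
      exact min_le_right _ _)

lemma integral_min_eq_intervalIntegral_measureReal_lt [IsFiniteMeasure μ] (hH : Measurable H)
    (hHnn : ∀ ω, 0 ≤ H ω) (ha : 0 ≤ a) :
    ∫ ω, min (H ω) a ∂μ = ∫ t in (0:ℝ)..a, μ.real {ω | t < H ω} := by
  have hlevel : ∀ t ∈ Set.Ioo 0 a, {ω | t < min (H ω) a} = {ω | t < H ω} := fun t ht => by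
    ext ω
    simp [ht.2]
  rw [(integrable_min_const hH hHnn ha).integral_eq_integral_meas_lt
      (Filter.Eventually.of_forall fun ω => le_min (hHnn ω) ha),
    setIntegral_eq_of_subset_of_forall_sdiff_eq_zero measurableSet_Ioi Set.Ioo_subset_Ioi_self,
    setIntegral_congr_fun measurableSet_Ioo fun t ht => by rw [hlevel t ht],
    ← integral_Ioc_eq_integral_Ioo, integral_of_le ha]
  rintro t ⟨ht0, htIoo⟩
  have hat : a ≤ t := not_lt.mp fun h => htIoo ⟨ht0, h⟩
  have hempty : {ω | t < min (H ω) a} = ∅ :=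
    Set.eq_empty_of_forall_notMem fun ω hω => (min_le_right (H ω) a).not_gt (hat.trans_lt hω)
  rw [hempty, measureReal_empty]

lemma integral_min_eq_setIntegral_lt_add (hH : Measurable H)
    (hint : Integrable (fun ω => min (H ω) a) μ) :
    ∫ ω, min (H ω) a ∂μ = (∫ ω in {ω | H ω < a}, H ω ∂μ) + a * μ.real {ω | a ≤ H ω} := by
  have hS : MeasurableSet {ω | H ω < a} := hH measurableSet_Iio
  have hSc : {ω | H ω < a}ᶜ = {ω | a ≤ H ω} := by
    ext ω
    simp
  rw [← integral_add_compl hS hint, hSc,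
    setIntegral_congr_fun hS fun ω hω => min_eq_left (le_of_lt hω),
    setIntegral_congr_fun (hS.compl.congr hSc) fun ω hω => min_eq_right hω,
    setIntegral_const, smul_eq_mul, mul_comm]

lemma setIntegral_lt_eq_intervalIntegral_sub [IsFiniteMeasure μ] (hH : Measurable H)
    (hHnn : ∀ ω, 0 ≤ H ω) (ha : 0 ≤ a) :
    ∫ ω in {ω | H ω < a}, H ω ∂μ =
      (∫ t in (0:ℝ)..a, μ.real {ω | t < H ω}) - a * μ.real {ω | a ≤ H ω} := by
  have hsplit := integral_min_eq_setIntegral_lt_add (μ := μ) hH (integrable_min_const hH hHnn ha)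
  rw [integral_min_eq_intervalIntegral_measureReal_lt hH hHnn ha] at hsplit
  linarith

lemma measure_le_eq_measure_lt_of_measure_eq_zero (hHa : μ {ω | H ω = a} = 0) :
    μ {ω | a ≤ H ω} = μ {ω | a < H ω} := by
  refine le_antisymm ?_ (measure_mono fun ω (hω : a < H ω) => hω.le)
  calc μ {ω | a ≤ H ω} ≤ μ ({ω | a < H ω} ∪ {ω | H ω = a}) :=
        measure_mono fun ω (hω : a ≤ H ω) => hω.lt_or_eq.imp id Eq.symm
    _ ≤ μ {ω | a < H ω} + μ {ω | H ω = a} := measure_union_le _ _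
    _ = μ {ω | a < H ω} := by rw [hHa, add_zero]

end

theorem conditional_expectation_node_depth_general
    {Ω : Type*} [MeasurableSpace Ω] (μ : Measure Ω) [IsProbabilityMeasure μ]
    (a : ℝ) (ha : 0 < a) (H : Ω → ℝ) (hH : Measurable H) (hHnn : ∀ ω, 0 ≤ H ω)
    (F : ℝ → ℝ)
    (hFa : 1 < F a)
    (htail : ∀ t ∈ Set.Icc 0 a, (μ {ω | t < H ω}).toReal = 1 / F t)
    (hHa : μ {ω | H ω = a} = 0) :
    (∫ ω in {ω | H ω < a}, H ω ∂μ) = (∫ t in (0:ℝ)..a, 1 / F t) - a / F a ∧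
    a + (F a - 1) *
        ((∫ ω in {ω | H ω < a}, H ω ∂μ) / (μ {ω | H ω < a}).toReal) =
      F a * ∫ t in (0:ℝ)..a, 1 / F t := by
  have htail_a : μ.real {ω | a ≤ H ω} = 1 / F a := by
    rw [measureReal_def, measure_le_eq_measure_lt_of_measure_eq_zero hHa,
      htail a ⟨ha.le, le_rfl⟩]
  have hprob_lt : (μ {ω | H ω < a}).toReal = 1 - 1 / F a := by
    have hcompl : {ω | H ω < a}ᶜ = {ω | a ≤ H ω} := by
      ext ω
      simp
    rw [← measureReal_def, ← htail_a, ← hcompl,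
      probReal_compl_eq_one_sub (s := {ω | H ω < a}) (hH measurableSet_Iio), sub_sub_cancel]
  have htail_int : ∫ t in (0:ℝ)..a, μ.real {ω | t < H ω} = ∫ t in (0:ℝ)..a, 1 / F t :=
    integral_congr fun t ht => htail t (by rwa [Set.uIcc_of_le ha.le] at ht)
  have hmain : (∫ ω in {ω | H ω < a}, H ω ∂μ) = (∫ t in (0:ℝ)..a, 1 / F t) - a / F a := by
    rw [setIntegral_lt_eq_intervalIntegral_sub hH hHnn ha.le, htail_int, htail_a, mul_one_div]
  refine ⟨hmain, ?_⟩
  have hFa0 : F a ≠ 0 := by positivity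
  have hFa1 : F a - 1 ≠ 0 := by linarith
  rw [hmain, hprob_lt]
  field_simp
  ring

/-- Expected node depth conditioned to be small, for a coalescent point process node depth `H`
with inverse tail distribution `F` (i.e. `P(H > t) = 1/F(t)` on `[0,a]`) and `P(H = a) = 0`:
`∫_{H < a} H dP = ∫_0^a dt/F(t) - a/F(a)`, and consequently the expected total tree length
satisfies `a + (F(a)-1)·E[H | H < a] = F(a)·∫_0^a dt/F(t)`. -/
theorem conditional_expectation_node_depth
    {Ω : Type*} [MeasurableSpace Ω] (μ : Measure Ω) [IsProbabilityMeasure μ]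
    (a : ℝ) (ha : 0 < a) (H : Ω → ℝ) (hH : Measurable H) (hHnn : ∀ ω, 0 ≤ H ω)
    (F : ℝ → ℝ) (hF1 : ∀ t ∈ Set.Icc 0 a, 1 ≤ F t)
    (hFa : 1 < F a)
    (htail : ∀ t ∈ Set.Icc 0 a, (μ {ω | t < H ω}).toReal = 1 / F t)
    (hHa : μ {ω | H ω = a} = 0) :
    (∫ ω in {ω | H ω < a}, H ω ∂μ) = (∫ t in (0:ℝ)..a, 1 / F t) - a / F a ∧
    a + (F a - 1) *
        ((∫ ω in {ω | H ω < a}, H ω ∂μ) / (μ {ω | H ω < a}).toReal) =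
      F a * ∫ t in (0:ℝ)..a, 1 / F t :=
  conditional_expectation_node_depth_general μ a ha H hH hHnn F hFa htail hHa
end

section
/- (Stochastic dominance of the selective regime.) For every real y ≥ 0 and all integers D ≥ 1 and Θ ≥ 1: Σ_{u=0}^{Θ−1} y^u / u! ≤ ( Σ_{u=0}^{Θ−1} y^u / (D^u·u!) )^D. Equivalently, with y = ρx, the cumulative distribution functions satisfy P(Γ* ≤ x) ≥ P(Γ ≤ x) for all x ≥ 0, where P(Γ* ≤ x) = 1 − e^{−ρx}Σ_{u=0}^{Θ−1}(ρx)^u/u! and P(Γ ≤ x) = 1 − e^{−ρx}(Σ_{u=0}^{Θ−1}(ρx)^u/(D^u u!))^D. -/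
open Finset

private lemma truncExp_nonneg (Θ : ℕ) (a : ℝ) (ha : 0 ≤ a) :
    0 ≤ ∑ u ∈ Finset.range Θ, a ^ u / u.factorial := by
  apply Finset.sum_nonneg
  intro u _
  positivity

private lemma truncExp_add_le (Θ : ℕ) (a b : ℝ) (ha : 0 ≤ a) (hb : 0 ≤ b) :
    ∑ s ∈ Finset.range Θ, (a + b) ^ s / s.factorial ≤
      (∑ i ∈ Finset.range Θ, a ^ i / i.factorial) *
        (∑ j ∈ Finset.range Θ, b ^ j / j.factorial) := by
  have hL : ∑ s ∈ Finset.range Θ, (a + b) ^ s / s.factorial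
      = ∑ x ∈ (Finset.range Θ).sigma (fun s => Finset.range (s + 1)),
          (a ^ x.2 / x.2.factorial) * (b ^ (x.1 - x.2) / (x.1 - x.2).factorial) := by
    rw [Finset.sum_sigma]
    refine Finset.sum_congr rfl fun s hs => ?_
    rw [add_pow, Finset.sum_div]
    refine Finset.sum_congr rfl fun j hj => ?_
    have hj' : j ≤ s := Nat.lt_succ_iff.mp (Finset.mem_range.mp hj)
    have hfac : (s.choose j) * j.factorial * (s - j).factorial = s.factorial :=
      Nat.choose_mul_factorial_mul_factorial hj'
    have hfacR : ((s.choose j : ℝ)) * j.factorial * (s - j).factorial = s.factorial := by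
      exact_mod_cast hfac
    have h1 : (j.factorial : ℝ) ≠ 0 := by positivity
    have h2 : ((s - j).factorial : ℝ) ≠ 0 := by positivity
    have h3 : (s.factorial : ℝ) ≠ 0 := by positivity
    field_simp
    rw [← hfacR]
    ring
  rw [hL, Finset.sum_mul_sum]
  have hT : ∑ x ∈ (Finset.range Θ).sigma (fun s => Finset.range (s + 1)),
        (a ^ x.2 / x.2.factorial) * (b ^ (x.1 - x.2) / (x.1 - x.2).factorial)
      = ∑ p ∈ (Finset.range Θ ×ˢ Finset.range Θ).filter (fun p => p.1 + p.2 < Θ),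
          (a ^ p.1 / p.1.factorial) * (b ^ p.2 / p.2.factorial) := by
    refine Finset.sum_nbij' (fun x => (x.2, x.1 - x.2)) (fun p => ⟨p.1 + p.2, p.1⟩) ?_ ?_ ?_ ?_ ?_
    · intro x hx
      simp only [Finset.mem_sigma, Finset.mem_range] at hx
      simp only [Finset.mem_filter, Finset.mem_product, Finset.mem_range]
      omega
    · intro p hp
      simp only [Finset.mem_filter, Finset.mem_product, Finset.mem_range] at hp
      simp only [Finset.mem_sigma, Finset.mem_range]
      omega
    · intro x hx
      rcases x with ⟨s, j⟩
      simp only [Finset.mem_sigma, Finset.mem_range] at hx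
      have hsj : j + (s - j) = s := by omega
      simp [hsj]
    · intro p hp
      simp
    · intro x hx
      rfl
  rw [hT, ← Finset.sum_product']
  refine Finset.sum_le_sum_of_subset_of_nonneg (Finset.filter_subset _ _) ?_
  intro p _ _
  positivity

private lemma truncExp_nsmul_le (Θ : ℕ) (t : ℝ) (ht : 0 ≤ t) :
    ∀ n : ℕ, 1 ≤ n →
      ∑ s ∈ Finset.range Θ, ((n : ℝ) * t) ^ s / s.factorial ≤
        (∑ i ∈ Finset.range Θ, t ^ i / i.factorial) ^ n := by
  intro n
  induction n with
  | zero => intro h; omega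
  | succ m ih =>
    intro _
    rcases Nat.eq_zero_or_pos m with hm | hm
    · subst hm; simp
    · have h1 : ((m + 1 : ℕ) : ℝ) * t = (m : ℝ) * t + t := by push_cast; ring
      rw [h1, pow_succ]
      calc ∑ s ∈ Finset.range Θ, ((m : ℝ) * t + t) ^ s / s.factorial
          ≤ (∑ i ∈ Finset.range Θ, ((m : ℝ) * t) ^ i / i.factorial) *
              (∑ j ∈ Finset.range Θ, t ^ j / j.factorial) :=
            truncExp_add_le Θ _ t (by positivity) ht
        _ ≤ (∑ i ∈ Finset.range Θ, t ^ i / i.factorial) ^ m *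
              (∑ j ∈ Finset.range Θ, t ^ j / j.factorial) := by
            apply mul_le_mul_of_nonneg_right (ih hm) (truncExp_nonneg Θ t ht)

/-- Stochastic dominance of the selective regime: for all `y ≥ 0`, `D ≥ 1`, `Θ ≥ 1`,
`∑_{u=0}^{Θ-1} y^u/u! ≤ (∑_{u=0}^{Θ-1} y^u/(D^u·u!))^D`; equivalently, the time `Γ*` to
accumulate `Θ` mutations with droplet selection is stochastically smaller than the time `Γ`
without droplet selection. -/
theorem selective_regime_stochastic_dominance
    (y : ℝ) (hy : 0 ≤ y) (D Θ : ℕ) (hD : 1 ≤ D) (hΘ : 1 ≤ Θ) :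
    ∑ u ∈ Finset.range Θ, y ^ u / u.factorial ≤
      (∑ u ∈ Finset.range Θ, y ^ u / (D ^ u * u.factorial)) ^ D := by
  have hDR : (0 : ℝ) < D := by exact_mod_cast hD
  have h1 : ∀ u : ℕ, y ^ u / ((D : ℝ) ^ u * u.factorial) = (y / D) ^ u / u.factorial := by
    intro u
    rw [div_pow, div_div]
  have h2 : (D : ℝ) * (y / D) = y := by field_simp
  calc ∑ u ∈ Finset.range Θ, y ^ u / u.factorial
      = ∑ u ∈ Finset.range Θ, ((D : ℝ) * (y / D)) ^ u / u.factorial := by rw [h2]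
    _ ≤ (∑ u ∈ Finset.range Θ, (y / D) ^ u / u.factorial) ^ D :=
        truncExp_nsmul_le Θ (y / D) (by positivity) D hD
    _ = (∑ u ∈ Finset.range Θ, y ^ u / (D ^ u * u.factorial)) ^ D := by
        simp_rw [h1]
end

section
/- (Asymptotic speed-up factor D.) Let ρ > 0, let D ≥ 1 be an integer, and let (X_{i,j})_{i ≥ 1, 1 ≤ j ≤ D} be an array of independent random variables on a probability space, each exponentially distributed with rate ρ/D. For each integer Θ ≥ 1 define Γ_Θ := min_{1 ≤ j ≤ D} Σ_{i=1}^Θ X_{i,j} and Γ*_Θ := Σ_{i=1}^Θ min_{1 ≤ j ≤ D} X_{i,j}. Then Γ*_Θ / Γ_Θ converges to 1/D almost surely as Θ → ∞. -/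
/-!
Each column sum `∑_{i<Θ} X_{i,j}` is a sum of i.i.d. `Exp(ρ/D)` variables, so by the strong law
`Γ_Θ/Θ → D/ρ` almost surely (a minimum of finitely many sequences with a common limit has that
limit). Each row minimum `min_j X_{i,j}` has survival function `(e^{-ρx/D})^D = e^{-ρx}`, so the
row minima are i.i.d. `Exp(ρ)` and `Γ*_Θ/Θ → 1/ρ` almost surely. The ratio tends to
`(1/ρ)/(D/ρ) = 1/D`.
-/

open MeasureTheory ProbabilityTheory Real Finset Filter

open Set in
lemma integral_id_expMeasure {r : ℝ} (hr : 0 < r) : ∫ x, x ∂expMeasure r = r⁻¹ := by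
  have hpdf : Measurable (exponentialPDF r) := (measurable_exponentialPDFReal r).ennreal_ofReal
  calc ∫ x, x ∂expMeasure r = ∫ x, (exponentialPDF r x).toReal • x :=
        integral_withDensity_eq_integral_toReal_smul hpdf
          (ae_of_all _ fun _ => ENNReal.ofReal_lt_top) _
    _ = ∫ x in Ioi 0, r * (x ^ ((2 : ℝ) - 1) * exp (-(r * x))) := by
        rw [← setIntegral_eq_integral_of_forall_compl_eq_zero fun x hx => ?_]
        · refine setIntegral_congr_fun measurableSet_Ioi fun x hx => ?_
          rw [exponentialPDF_of_nonneg (le_of_lt hx), ENNReal.toReal_ofReal (by positivity),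
            smul_eq_mul]
          norm_num
          ring
        · rcases (not_lt.1 (mem_Ioi.not.1 hx)).lt_or_eq with hneg | rfl
          · simp [exponentialPDF_of_neg hneg]
          · simp
    _ = r⁻¹ := by
        rw [integral_const_mul, integral_rpow_mul_exp_neg_mul_Ioi two_pos hr, Gamma_two]
        norm_num
        field_simp

lemma integrable_of_map_eq_expMeasure {Ω : Type*} [MeasurableSpace Ω] {μ : Measure Ω}
    {Z : Ω → ℝ} (hZ : Measurable Z) {r : ℝ} (hr : 0 < r)
    (hlaw : μ.map Z = expMeasure r) : Integrable Z μ := by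
  have hint : Integrable id (expMeasure r) :=
    Integrable.of_integral_ne_zero (by simpa [integral_id_expMeasure hr] using hr.ne')
  rw [← hlaw] at hint
  exact hint.comp_measurable hZ

lemma integral_of_map_eq_expMeasure {Ω : Type*} [MeasurableSpace Ω] {μ : Measure Ω}
    {Z : Ω → ℝ} (hZ : Measurable Z) {r : ℝ} (hr : 0 < r)
    (hlaw : μ.map Z = expMeasure r) : ∫ ω, Z ω ∂μ = r⁻¹ := by
  rw [← integral_id_expMeasure hr, ← hlaw]
  exact (integral_map hZ.aemeasurable aestronglyMeasurable_id).symm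

lemma expMeasure_Ioi {r : ℝ} (hr : 0 < r) (x : ℝ) :
    expMeasure r (Set.Ioi x) = ENNReal.ofReal (exp (-(r * max x 0))) := by
  have := isProbabilityMeasure_expMeasure hr
  rw [← Set.compl_Iic, prob_compl_eq_one_sub measurableSet_Iic, ← ofReal_cdf,
    cdf_expMeasure_eq hr]
  rcases le_or_gt 0 x with hx | hx
  · have hexp_le_one : exp (-(r * x)) ≤ 1 := exp_le_one_iff.2 (neg_nonpos.2 (by positivity))
    rw [if_pos hx, max_eq_left hx, ← ENNReal.ofReal_one,
      ← ENNReal.ofReal_sub _ (sub_nonneg.2 hexp_le_one), sub_sub_cancel]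
  · rw [if_neg hx.not_ge, max_eq_right hx.le]
    simp

lemma eq_expMeasure_of_measure_Ioi {ν : Measure ℝ} [IsProbabilityMeasure ν] {r : ℝ} (hr : 0 < r)
    (h : ∀ x, ν (Set.Ioi x) = ENNReal.ofReal (exp (-(r * max x 0)))) : ν = expMeasure r := by
  have := isProbabilityMeasure_expMeasure hr
  refine Measure.ext_of_Iic _ _ fun x => ?_
  rw [← Set.compl_Ioi, prob_compl_eq_one_sub measurableSet_Ioi,
    prob_compl_eq_one_sub measurableSet_Ioi, h, expMeasure_Ioi hr]

lemma map_iInf_eq_expMeasure {Ω ι : Type*} [MeasurableSpace Ω] {μ : Measure Ω}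
    [IsProbabilityMeasure μ] [Fintype ι] [Nonempty ι] {X : ι → Ω → ℝ}
    (hX : ∀ i, Measurable (X i)) (hindep : iIndepFun X μ) {r : ℝ} (hr : 0 < r)
    (hlaw : ∀ i, μ.map (X i) = expMeasure r) :
    μ.map (fun ω => ⨅ i, X i ω) = expMeasure (Fintype.card ι * r) := by
  have hmeas : Measurable fun ω => ⨅ i, X i ω := Measurable.iInf hX
  have := Measure.isProbabilityMeasure_map (μ := μ) hmeas.aemeasurable
  refine eq_expMeasure_of_measure_Ioi (by positivity) fun x => ?_
  have hpre : (fun ω => ⨅ i, X i ω) ⁻¹' Set.Ioi x = ⋂ i, X i ⁻¹' Set.Ioi x := by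
    ext ω
    simp [← Finset.inf'_univ_eq_ciInf, Finset.lt_inf'_iff]
  rw [Measure.map_apply hmeas measurableSet_Ioi, hpre,
    hindep.meas_iInter fun i => ⟨_, measurableSet_Ioi, rfl⟩]
  simp_rw [← Measure.map_apply (hX _) measurableSet_Ioi, hlaw, expMeasure_Ioi hr,
    prod_const, card_univ, ← ENNReal.ofReal_pow (exp_nonneg _), ← exp_nat_mul]
  ring_nf

lemma ae_tendsto_average_of_expMeasure {Ω : Type*} [MeasurableSpace Ω] {μ : Measure Ω}
    {Y : ℕ → Ω → ℝ} (hY : ∀ i, Measurable (Y i)) (hindep : Pairwise fun i j => Y i ⟂ᵢ[μ] Y j)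
    {r : ℝ} (hr : 0 < r) (hlaw : ∀ i, μ.map (Y i) = expMeasure r) :
    ∀ᵐ ω ∂μ, Tendsto (fun n : ℕ => (∑ i ∈ range n, Y i ω) / n) atTop (nhds r⁻¹) := by
  have hident (i : ℕ) : IdentDistrib (Y i) (Y 0) μ μ :=
    ⟨(hY i).aemeasurable, (hY 0).aemeasurable, by rw [hlaw, hlaw]⟩
  simpa only [integral_of_map_eq_expMeasure (hY 0) hr (hlaw 0)] using
    strong_law_ae_real Y (integrable_of_map_eq_expMeasure (hY 0) hr (hlaw 0)) hindep hident

lemma ProbabilityTheory.iIndepFun.indepFun_iInf_row {Ω ι κ : Type*} [MeasurableSpace Ω]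
    {μ : Measure Ω} [Fintype κ] {X : ι × κ → Ω → ℝ} (hX : ∀ p, Measurable (X p))
    (hindep : iIndepFun X μ) {i i' : ι} (hii' : i ≠ i') :
    (fun ω => ⨅ j, X (i, j) ω) ⟂ᵢ[μ] (fun ω => ⨅ j, X (i', j) ω) := by
  let row (i : ι) : Finset (ι × κ) := univ.map (Function.Embedding.sectR i κ)
  have hmem (i : ι) (j : κ) : (i, j) ∈ row i := mem_map_of_mem _ (mem_univ j)
  have hdisj : Disjoint (row i) (row i') := by
    simp [row, disjoint_left, hii'.symm]
  exact (hindep.indepFun_finset _ _ hdisj hX).comp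
    (φ := fun v : row i → ℝ => ⨅ j, v ⟨_, hmem i j⟩)
    (ψ := fun v : row i' → ℝ => ⨅ j, v ⟨_, hmem i' j⟩)
    (Measurable.iInf fun _ => measurable_pi_apply _)
    (Measurable.iInf fun _ => measurable_pi_apply _)

lemma Filter.Tendsto.ciInf {α ι L : Type*} [ConditionallyCompleteLattice L] [TopologicalSpace L]
    [ContinuousInf L] [Fintype ι] [Nonempty ι] {l : Filter α} {f : ι → α → L} {g : ι → L}
    (h : ∀ i, Tendsto (f i) l (nhds (g i))) :
    Tendsto (fun a => ⨅ i, f i a) l (nhds (⨅ i, g i)) := by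
  simpa only [← Finset.inf'_univ_eq_ciInf] using
    Tendsto.finset_inf'_nhds_apply univ_nonempty fun i _ => h i

lemma tendsto_div_of_tendsto_div_natCast {u v : ℕ → ℝ} {a b : ℝ}
    (hu : Tendsto (fun n : ℕ => u n / n) atTop (nhds a))
    (hv : Tendsto (fun n : ℕ => v n / n) atTop (nhds b)) (hb : b ≠ 0) :
    Tendsto (fun n => u n / v n) atTop (nhds (a / b)) := by
  refine (hu.div hv hb).congr' ?_
  filter_upwards [eventually_ne_atTop 0] with n hn
  exact div_div_div_cancel_right₀ (Nat.cast_ne_zero.2 hn) _ _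

/-- Asymptotic speed-up factor `D`: for an array `(X_{i,j})_{i ≥ 1, 1 ≤ j ≤ D}` of independent
exponential random variables with rate `ρ/D`, setting
`Γ_Θ = min_j ∑_{i<Θ} X_{i,j}` (time without droplet selection) and
`Γ*_Θ = ∑_{i<Θ} min_j X_{i,j}` (time with droplet selection),
the ratio `Γ*_Θ/Γ_Θ` converges to `1/D` almost surely as `Θ → ∞`. -/
theorem asymptotic_speedup_factor
    {Ω : Type*} [MeasurableSpace Ω] (μ : Measure Ω) [IsProbabilityMeasure μ]
    (ρ : ℝ) (hρ : 0 < ρ) (D : ℕ) (hD : 1 ≤ D)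
    (X : ℕ × Fin D → Ω → ℝ) (hXmeas : ∀ p, Measurable (X p))
    (hIndep : iIndepFun X μ)
    (hXlaw : ∀ p, Measure.map (X p) μ = expMeasure (ρ / D))
    (Γ Γstar : ℕ → Ω → ℝ)
    (hΓ : ∀ Θ ω, Γ Θ ω = ⨅ j : Fin D, ∑ i ∈ Finset.range Θ, X (i, j) ω)
    (hΓstar : ∀ Θ ω, Γstar Θ ω = ∑ i ∈ Finset.range Θ, ⨅ j : Fin D, X (i, j) ω) :
    ∀ᵐ ω ∂μ, Tendsto (fun Θ : ℕ => Γstar Θ ω / Γ Θ ω) atTop (nhds (1 / D)) := by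
  have : NeZero D := ⟨by omega⟩
  have hρD : 0 < ρ / D := by positivity
  have hcolumn (j : Fin D) := ae_tendsto_average_of_expMeasure (fun i => hXmeas (i, j))
    (fun i i' hii' => hIndep.indepFun (by simpa using hii')) hρD (fun i => hXlaw (i, j))
  have hrow := ae_tendsto_average_of_expMeasure (fun i => Measurable.iInf fun j => hXmeas (i, j))
    (fun i i' hii' => hIndep.indepFun_iInf_row hXmeas hii') hρ fun i => by
      rw [map_iInf_eq_expMeasure (fun j => hXmeas (i, j))
        (hIndep.precomp (Prod.mk_right_injective i)) hρD fun j => hXlaw (i, j),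
        Fintype.card_fin, mul_div_cancel₀ _ (NeZero.ne _)]
  filter_upwards [ae_all_iff.2 hcolumn, hrow] with ω hcolumnω hrowω
  have hΓ_avg : Tendsto (fun n : ℕ => Γ n ω / n) atTop (nhds (ρ / D)⁻¹) := by
    simpa only [hΓ, div_eq_mul_inv, Real.iInf_mul_of_nonneg (inv_nonneg.2 (Nat.cast_nonneg _)),
      ciInf_const] using Tendsto.ciInf hcolumnω
  have hΓstar_avg : Tendsto (fun n : ℕ => Γstar n ω / n) atTop (nhds ρ⁻¹) := by
    simpa only [hΓstar] using hrowω
  convert tendsto_div_of_tendsto_div_natCast hΓstar_avg hΓ_avg (by positivity) using 2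
  field_simp
end
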